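/- arXiv:1106.3459 — 5 statements merged into one kernel-verified Lean document; each statement's English description precedes it below -/
import Mathlib

section
/- Let X = {0} ∪ {(x,y) ∈ ℝ² : x > 0} with distance d((x₁,y₁),(x₂,y₂)) = min(x₁ + x₂, √((x₂−x₁)² + (y₂−y₁)²)), d((x,y),0) = x, and d(0,0) = 0. Then d is a metric on X. -/
/-- The half-plane with crushed boundary: the open right half-plane together with one
extra point `none` (the crushed boundary point `0`). -/
def CHP : Type := Option {p : ℝ × ℝ // 0 < p.1}

/-- The distance of Example 6.2: within the half-plane, the minimum of the Euclidean
distance and the sum of the `x`-coordinates; the distance from `(x,y)` to the crushed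
point is `x`. -/
noncomputable def chpDist : CHP → CHP → ℝ
  | none, none => 0
  | none, some p => p.1.1
  | some p, none => p.1.1
  | some p, some q =>
      min (p.1.1 + q.1.1) (Real.sqrt ((q.1.1 - p.1.1) ^ 2 + (q.1.2 - p.1.2) ^ 2))

private lemma euc_eq (p q : ℝ × ℝ) :
    Real.sqrt ((q.1 - p.1) ^ 2 + (q.2 - p.2) ^ 2)
      = dist (⟨p.1, p.2⟩ : ℂ) (⟨q.1, q.2⟩ : ℂ) := by
  rw [Complex.dist_eq_re_im]
  norm_num
  ring_nf

private lemma abs_sub_le_euc (p q : ℝ × ℝ) :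
    |q.1 - p.1| ≤ Real.sqrt ((q.1 - p.1) ^ 2 + (q.2 - p.2) ^ 2) := by
  calc |q.1 - p.1| = Real.sqrt ((q.1 - p.1) ^ 2) := (Real.sqrt_sq_eq_abs _).symm
    _ ≤ _ := Real.sqrt_le_sqrt (by nlinarith [sq_nonneg (q.2 - p.2)])

/-- `chpDist` is a metric on `CHP`. -/
theorem chpDist_is_metric :
    (∀ a : CHP, chpDist a a = 0) ∧
    (∀ a b : CHP, 0 ≤ chpDist a b) ∧
    (∀ a b : CHP, chpDist a b = chpDist b a) ∧
    (∀ a b c : CHP, chpDist a c ≤ chpDist a b + chpDist b c) ∧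
    (∀ a b : CHP, chpDist a b = 0 → a = b) := by
  refine ⟨?_, ?_, ?_, ?_, ?_⟩
  · rintro (_ | p)
    · rfl
    · show min (p.1.1 + p.1.1) (Real.sqrt ((p.1.1 - p.1.1) ^ 2 + (p.1.2 - p.1.2) ^ 2)) = 0
      have h : Real.sqrt ((p.1.1 - p.1.1) ^ 2 + (p.1.2 - p.1.2) ^ 2) = 0 := by
        norm_num
      rw [h]
      exact min_eq_right (by linarith [p.2])
  · rintro (_ | p) (_ | q)
    · exact le_refl 0
    · exact q.2.le
    · exact p.2.le
    · exact le_min (by linarith [p.2, q.2]) (Real.sqrt_nonneg _)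
  · rintro (_ | p) (_ | q) <;> try rfl
    show min (p.1.1 + q.1.1) _ = min (q.1.1 + p.1.1) _
    congr 1
    · ring
    · congr 1
      ring
  · rintro (_ | p) (_ | b) (_ | q) <;> simp only [chpDist]
    · norm_num
    · linarith
    · linarith [b.2]
    · -- q.1 ≤ b.1 + min(b.1+q.1, e(b,q))
      have h := abs_le.mp (abs_sub_le_euc b.1 q.1)
      have : q.1.1 - b.1.1 ≤ min (b.1.1 + q.1.1)
          (Real.sqrt ((q.1.1 - b.1.1) ^ 2 + (q.1.2 - b.1.2) ^ 2)) :=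
        le_min (by linarith [b.2]) h.2
      linarith
    · linarith
    · exact min_le_left _ _
    · -- min(p+b, e(p,b)) + b ≥ p
      have h := abs_le.mp (abs_sub_le_euc p.1 b.1)
      have : p.1.1 - b.1.1 ≤ min (p.1.1 + b.1.1)
          (Real.sqrt ((b.1.1 - p.1.1) ^ 2 + (b.1.2 - p.1.2) ^ 2)) :=
        le_min (by linarith [b.2]) (by linarith)
      linarith
    · -- main triangle inequality
      have hpb := abs_le.mp (abs_sub_le_euc p.1 b.1)
      have hbq := abs_le.mp (abs_sub_le_euc b.1 q.1)
      have htri : Real.sqrt ((q.1.1 - p.1.1) ^ 2 + (q.1.2 - p.1.2) ^ 2) ≤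
          Real.sqrt ((b.1.1 - p.1.1) ^ 2 + (b.1.2 - p.1.2) ^ 2) +
          Real.sqrt ((q.1.1 - b.1.1) ^ 2 + (q.1.2 - b.1.2) ^ 2) := by
        rw [euc_eq p.1 q.1, euc_eq p.1 b.1, euc_eq b.1 q.1]
        exact dist_triangle _ _ _
      rcases min_cases (p.1.1 + b.1.1)
          (Real.sqrt ((b.1.1 - p.1.1) ^ 2 + (b.1.2 - p.1.2) ^ 2)) with ⟨h1, _⟩ | ⟨h1, _⟩ <;>
        rcases min_cases (b.1.1 + q.1.1)
          (Real.sqrt ((q.1.1 - b.1.1) ^ 2 + (q.1.2 - b.1.2) ^ 2)) with ⟨h2, _⟩ | ⟨h2, _⟩ <;>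
        rw [h1, h2]
      · exact (min_le_left _ _).trans (by linarith [b.2])
      · exact (min_le_left _ _).trans (by linarith [hbq.2])
      · exact (min_le_left _ _).trans (by linarith [hpb.1])
      · exact (min_le_right _ _).trans htri
  · rintro (_ | p) (_ | q) <;> intro h
    · rfl
    · exact absurd h q.2.ne'
    · exact absurd h p.2.ne'
    · rcases min_eq_iff.mp h with ⟨h1, _⟩ | ⟨h1, _⟩
      · exfalso; linarith [p.2, q.2]
      · have h2 : (q.1.1 - p.1.1) ^ 2 + (q.1.2 - p.1.2) ^ 2 = 0 := by
          have := Real.sqrt_eq_zero'.mp h1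
          nlinarith [sq_nonneg (q.1.1 - p.1.1), sq_nonneg (q.1.2 - p.1.2)]
        have hx : q.1.1 = p.1.1 := by nlinarith [sq_nonneg (q.1.1 - p.1.1), sq_nonneg (q.1.2 - p.1.2)]
        have hy : q.1.2 = p.1.2 := by nlinarith [sq_nonneg (q.1.1 - p.1.1), sq_nonneg (q.1.2 - p.1.2)]
        exact congrArg some (Subtype.ext (Prod.ext hx.symm hy.symm))
end

section
/- Let X be the half-plane with crushed boundary: X = {0} ∪ {(x,y) ∈ ℝ² : x > 0}, with d((x₁,y₁),(x₂,y₂)) = min(x₁+x₂, √((x₂−x₁)²+(y₂−y₁)²)) and d((x,y),0) = x. Then X is not a CAT(0) space. (For instance, there exist two distinct geodesics between two points of X, namely between (1, y₁) and (1, y₂) when |y₁ − y₂| = 2.) -/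
/-- The point `(1, y)` of the open half-plane, as a point of `CHP`. -/
def CHP.pt (y : ℝ) : CHP := some ⟨(1, y), one_pos⟩

/-- A geodesic parameterized proportionally to arclength by `[0,1]`. -/
def IsGeodesic {X : Type*} [MetricSpace X] (γ : ℝ → X) : Prop :=
  ∀ s ∈ Set.Icc (0:ℝ) 1, ∀ t ∈ Set.Icc (0:ℝ) 1,
    dist (γ s) (γ t) = dist (γ 0) (γ 1) * |s - t|

/-- `X` is a CAT(0) space: it is geodesic, and every geodesic triangle satisfies the
CAT(0) comparison inequality with respect to Euclidean (here: `ℂ`) comparison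
triangles. -/
def IsCAT0 (X : Type*) [MetricSpace X] : Prop :=
  (∀ x y : X, ∃ γ : ℝ → X, γ 0 = x ∧ γ 1 = y ∧ IsGeodesic γ) ∧
  (∀ γ₁ γ₂ : ℝ → X, IsGeodesic γ₁ → IsGeodesic γ₂ → γ₁ 0 = γ₂ 0 →
    ∀ x' y' z' : ℂ,
      dist x' y' = dist (γ₁ 0) (γ₁ 1) →
      dist x' z' = dist (γ₂ 0) (γ₂ 1) →
      dist y' z' = dist (γ₁ 1) (γ₂ 1) →
      ∀ s ∈ Set.Icc (0:ℝ) 1, ∀ t ∈ Set.Icc (0:ℝ) 1,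
        dist (γ₁ s) (γ₂ t) ≤ dist (x' + s • (y' - x')) (x' + t • (z' - x')))

open Set

lemma IsGeodesic.of_dist_eq_mul_sub {X : Type*} [MetricSpace X] {γ : ℝ → X} {L : ℝ}
    (h : ∀ s ∈ Icc (0 : ℝ) 1, ∀ t ∈ Icc (0 : ℝ) 1, s ≤ t → dist (γ s) (γ t) = L * (t - s)) :
    IsGeodesic γ := by
  have hL : dist (γ 0) (γ 1) = L := by
    simpa using h 0 (left_mem_Icc.2 zero_le_one) 1 (right_mem_Icc.2 zero_le_one) zero_le_one
  intro s hs t ht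
  rw [hL]
  rcases le_total s t with hst | hts
  · rw [h s hs t ht hst, abs_sub_comm, abs_of_nonneg (sub_nonneg.2 hst)]
  · rw [dist_comm, h t ht s hs hts, abs_of_nonneg (sub_nonneg.2 hts)]

/-- Two geodesics with the same endpoints share the degenerate comparison triangle
`0, d, d` in `ℂ`, whose comparison points for equal parameters coincide. -/
lemma IsCAT0.eqOn_of_isGeodesic {X : Type*} [MetricSpace X] (hX : IsCAT0 X)
    {γ₀ γ₁ : ℝ → X} (h₀ : IsGeodesic γ₀) (h₁ : IsGeodesic γ₁)
    (hstart : γ₀ 0 = γ₁ 0) (hend : γ₀ 1 = γ₁ 1) : EqOn γ₀ γ₁ (Icc 0 1) := by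
  intro t ht
  set d := dist (γ₀ 0) (γ₀ 1) with hd_def
  have hd : dist (0 : ℂ) d = d := by simp [Complex.dist_eq, d]
  have hcomp := hX.2 γ₀ γ₁ h₀ h₁ hstart 0 d d hd (by rw [hd, hd_def, hstart, hend])
    (by rw [hend, dist_self, dist_self]) t ht t ht
  exact dist_le_zero.1 (by simpa using hcomp)

namespace CHP

/-- Meant for `0 ≤ x`; every `x ≤ 0` gives the crushed point `none`. -/
noncomputable def mk (x y : ℝ) : CHP := if h : 0 < x then some ⟨(x, y), h⟩ else none

lemma mk_one (y : ℝ) : mk 1 y = pt y := dif_pos one_pos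

lemma mk_zero (y : ℝ) : mk 0 y = none := dif_neg (lt_irrefl 0)

/-- `chpDist` is the quotient of the metric `min (x₁ + x₂) ‖p₂ - p₁‖` on the closed half-plane. -/
lemma chpDist_mk {a b : ℝ} (ha : 0 ≤ a) (hb : 0 ≤ b) (y y' : ℝ) :
    chpDist (mk a y) (mk b y') = min (a + b) (√((b - a) ^ 2 + (y' - y) ^ 2)) := by
  have le_sqrt (c e : ℝ) : c ≤ √(c ^ 2 + e ^ 2) :=
    (le_abs_self c).trans (Real.abs_le_sqrt (by nlinarith))
  rcases ha.eq_or_lt with rfl | ha <;> rcases hb.eq_or_lt with rfl | hb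
  · simp [mk_zero, chpDist]
  · simpa [mk_zero, mk, hb, chpDist] using le_sqrt b (y' - y)
  · simpa [mk_zero, mk, ha, chpDist] using le_sqrt a (y' - y)
  · simp [mk, ha, hb, chpDist]

lemma chpDist_mk_of_eq_snd {a b : ℝ} (ha : 0 ≤ a) (hb : 0 ≤ b) (y : ℝ) :
    chpDist (mk a y) (mk b y) = |b - a| := by
  rw [chpDist_mk ha hb, sub_self, zero_pow two_ne_zero, add_zero, Real.sqrt_sq_eq_abs]
  exact min_eq_right (abs_sub_le_iff.2 ⟨by linarith, by linarith⟩)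

lemma chpDist_mk_of_add_le {a b y y' : ℝ} (ha : 0 ≤ a) (hb : 0 ≤ b) (h : a + b ≤ |y' - y|) :
    chpDist (mk a y) (mk b y') = a + b := by
  rw [chpDist_mk ha hb]
  exact min_eq_left (h.trans (Real.abs_le_sqrt (by nlinarith)))

lemma chpDist_pt (a b : ℝ) : chpDist (pt a) (pt b) = min 2 |b - a| := by
  rw [← mk_one, ← mk_one, chpDist_mk zero_le_one zero_le_one]
  norm_num [Real.sqrt_sq_eq_abs]

noncomputable def verticalPath (y₁ y₂ : ℝ) (t : ℝ) : CHP := pt (y₁ + t * (y₂ - y₁))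

noncomputable def pathViaBoundary (y₁ y₂ : ℝ) (t : ℝ) : CHP :=
  mk |1 - 2 * t| (if t ≤ 1 / 2 then y₁ else y₂)

lemma verticalPath_zero (y₁ y₂ : ℝ) : verticalPath y₁ y₂ 0 = pt y₁ := by
  simp [verticalPath]

lemma verticalPath_one (y₁ y₂ : ℝ) : verticalPath y₁ y₂ 1 = pt y₂ := by
  simp [verticalPath]

lemma pathViaBoundary_zero (y₁ y₂ : ℝ) : pathViaBoundary y₁ y₂ 0 = pt y₁ := by
  norm_num [pathViaBoundary, mk_one]

lemma pathViaBoundary_one (y₁ y₂ : ℝ) : pathViaBoundary y₁ y₂ 1 = pt y₂ := by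
  norm_num [pathViaBoundary, mk_one]

lemma pathViaBoundary_half (y₁ y₂ : ℝ) : pathViaBoundary y₁ y₂ (1 / 2) = none := by
  have : |1 - 2 * (1 / 2 : ℝ)| = 0 := by norm_num
  rw [pathViaBoundary, this, mk_zero]

variable [MetricSpace CHP] (hm : ∀ a b : CHP, dist a b = chpDist a b)
include hm

lemma isGeodesic_verticalPath {y₁ y₂ : ℝ} (h : |y₂ - y₁| ≤ 2) :
    IsGeodesic (verticalPath y₁ y₂) := by
  refine IsGeodesic.of_dist_eq_mul_sub (L := |y₂ - y₁|) fun s hs t ht hst => ?_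
  have hdiff : y₁ + t * (y₂ - y₁) - (y₁ + s * (y₂ - y₁)) = (t - s) * (y₂ - y₁) := by ring
  have hlen : |(t - s) * (y₂ - y₁)| = |y₂ - y₁| * (t - s) := by
    rw [abs_mul, abs_of_nonneg (sub_nonneg.2 hst), mul_comm]
  rw [hm, verticalPath, verticalPath, chpDist_pt, hdiff, hlen]
  exact min_eq_right (by nlinarith [abs_nonneg (y₂ - y₁), hs.1, ht.2])

lemma isGeodesic_pathViaBoundary {y₁ y₂ : ℝ} (h : 2 ≤ |y₂ - y₁|) :
    IsGeodesic (pathViaBoundary y₁ y₂) := by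
  refine IsGeodesic.of_dist_eq_mul_sub (L := 2) fun s hs t ht hst => ?_
  rw [hm, pathViaBoundary, pathViaBoundary]
  rcases le_or_gt t (1 / 2) with ht' | ht'
  · rw [if_pos (hst.trans ht'), if_pos ht', abs_of_nonneg (by linarith : (0 : ℝ) ≤ 1 - 2 * s),
      abs_of_nonneg (by linarith : (0 : ℝ) ≤ 1 - 2 * t), chpDist_mk_of_eq_snd (by linarith)
      (by linarith), abs_of_nonpos (by linarith)]
    ring
  rcases le_or_gt s (1 / 2) with hs' | hs'
  · rw [if_pos hs', if_neg (not_le.2 ht'), abs_of_nonneg (by linarith : (0 : ℝ) ≤ 1 - 2 * s),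
      abs_of_neg (by linarith : 1 - 2 * t < 0), chpDist_mk_of_add_le (by linarith) (by linarith)
      (by linarith [ht.2, hs.1])]
    ring
  · rw [if_neg (not_le.2 hs'), if_neg (not_le.2 ht'), abs_of_neg (by linarith : 1 - 2 * s < 0),
      abs_of_neg (by linarith : 1 - 2 * t < 0), chpDist_mk_of_eq_snd (by linarith)
      (by linarith), abs_of_nonneg (by linarith)]
    ring

lemma exists_isGeodesic_ne {y₁ y₂ : ℝ} (h : |y₁ - y₂| = 2) :
    ∃ γ₀ γ₁ : ℝ → CHP, IsGeodesic γ₀ ∧ IsGeodesic γ₁ ∧ γ₀ 0 = pt y₁ ∧ γ₀ 1 = pt y₂ ∧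
      γ₁ 0 = pt y₁ ∧ γ₁ 1 = pt y₂ ∧ ∃ t ∈ Icc (0 : ℝ) 1, γ₀ t ≠ γ₁ t := by
  rw [abs_sub_comm] at h
  exact ⟨verticalPath y₁ y₂, pathViaBoundary y₁ y₂, isGeodesic_verticalPath hm h.le,
    isGeodesic_pathViaBoundary hm h.ge, verticalPath_zero y₁ y₂, verticalPath_one y₁ y₂,
    pathViaBoundary_zero y₁ y₂, pathViaBoundary_one y₁ y₂, 1 / 2, by norm_num,
    by rw [pathViaBoundary_half]; exact Option.some_ne_none _⟩

end CHP

/-- the half-plane with crushed boundary is not CAT(0); indeed there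
exist two distinct geodesics between `(1, y₁)` and `(1, y₂)` when `|y₁ - y₂| = 2`. -/
theorem CHP_not_CAT0 (m : MetricSpace CHP)
    (hm : ∀ a b : CHP, m.dist a b = chpDist a b) :
    ¬ @IsCAT0 CHP m ∧
    ∀ y₁ y₂ : ℝ, |y₁ - y₂| = 2 →
      ∃ γ₀ γ₁ : ℝ → CHP,
        @IsGeodesic CHP m γ₀ ∧ @IsGeodesic CHP m γ₁ ∧
        γ₀ 0 = CHP.pt y₁ ∧ γ₀ 1 = CHP.pt y₂ ∧
        γ₁ 0 = CHP.pt y₁ ∧ γ₁ 1 = CHP.pt y₂ ∧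
        ∃ t ∈ Set.Icc (0:ℝ) 1, γ₀ t ≠ γ₁ t := by
  let _ : MetricSpace CHP := m
  refine ⟨fun hcat => ?_, fun _ _ => CHP.exists_isGeodesic_ne hm⟩
  obtain ⟨γ₀, γ₁, hγ₀, hγ₁, h₀₀, h₀₁, h₁₀, h₁₁, t, ht, hne⟩ :=
    CHP.exists_isGeodesic_ne hm (y₁ := 0) (y₂ := 2) (by norm_num)
  exact hne (hcat.eqOn_of_isGeodesic hγ₀ hγ₁ (h₀₀.trans h₁₀.symm) (h₀₁.trans h₁₁.symm) ht)
end

section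
/- Let Q be the lattice (free ℤ-module with symmetric bilinear form) of rank 1+p+q+r with orthogonal basis on which the form is diag(1; −1,…,−1; −1,…,−1; −1,…,−1), the blocks having sizes 1, p, q, r. Let y_Q = (a; b,…,b,b−1; c,…,c,c+1; d,…,d) where a = (1/p − 1/q)/(1 − 1/p − 1/q − 1/r), b = (a+1)/p, c = (a−1)/q, d = a/r, and 1/p + 1/q + 1/r < 1. Then the norm N = y_Q·y_Q satisfies 2 + N = (1/p − 1/q)²/(1 − 1/p − 1/q − 1/r) + 1/p + 1/q, which is strictly positive. Hence N > −2. -/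
/-- for `y_Q = (a; b,…,b,b−1; c,…,c,c+1; d,…,d)` in the lattice with
form `diag(1; −1,…; −1,…; −1,…)` (blocks of sizes `1, p, q, r`), the norm
`N = a² − ((p−1)b² + (b−1)²) − ((q−1)c² + (c+1)²) − r·d²` satisfies
`2 + N = (1/p − 1/q)²/(1 − 1/p − 1/q − 1/r) + 1/p + 1/q > 0`; hence `N > −2`. -/
theorem two_add_N_formula (p q r : ℝ) (hp : 0 < p) (hq : 0 < q) (hr : 0 < r)
    (hpqr : 1/p + 1/q + 1/r < 1)
    (a b c d N : ℝ)
    (ha : a = (1/p - 1/q) / (1 - 1/p - 1/q - 1/r))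
    (hb : b = (a + 1) / p) (hc : c = (a - 1) / q) (hd : d = a / r)
    (hN : N = a^2 - ((p - 1) * b^2 + (b - 1)^2) - ((q - 1) * c^2 + (c + 1)^2)
            - r * d^2) :
    2 + N = (1/p - 1/q)^2 / (1 - 1/p - 1/q - 1/r) + 1/p + 1/q ∧
    0 < 2 + N ∧ -2 < N := by
  have hD : 0 < 1 - 1/p - 1/q - 1/r := by linarith
  have hDne : (1 - 1/p - 1/q - 1/r) ≠ 0 := ne_of_gt hD
  have hpne := hp.ne'
  have hqne := hq.ne'
  have hrne := hr.ne'
  have key : 2 + N = (1/p - 1/q)^2 / (1 - 1/p - 1/q - 1/r) + 1/p + 1/q := by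
    have h2 : 2 + N = a^2 * (1 - 1/p - 1/q - 1/r) + 1/p + 1/q := by
      subst hN hb hc hd
      field_simp
      ring
    rw [h2, ha]
    set D := 1 - 1/p - 1/q - 1/r with hDdef
    rw [div_pow, div_mul_eq_mul_div, sq D, ← div_div,
      mul_div_assoc, div_self hDne, mul_one]
  have h1 : 0 ≤ (1/p - 1/q)^2 / (1 - 1/p - 1/q - 1/r) :=
    div_nonneg (sq_nonneg _) hD.le
  have h2 : 0 < 1/p := by positivity
  have h3 : 0 < 1/q := by positivity
  exact ⟨key, by rw [key]; linarith, by linarith [key]⟩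
end

section
/- Let p, q, r be reals with 4 ≤ p ≤ q and r ≥ 2 and 1/p + 1/q + 1/r < 1. Define N by 2 + N = (1/p − 1/q)²/(1 − 1/p − 1/q − 1/r) + 1/p + 1/q. Then 2 + N ≤ 1/2; equivalently N ≤ −3/2. -/
/-- for `4 ≤ p ≤ q`, `r ≥ 2`, `1/p + 1/q + 1/r < 1`, and `N` defined
by `2 + N = (1/p − 1/q)²/(1 − 1/p − 1/q − 1/r) + 1/p + 1/q`, one has
`2 + N ≤ 1/2`, i.e. `N ≤ −3/2`. -/
theorem two_add_N_le_half (p q r N : ℝ)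
    (hp : 4 ≤ p) (hpq : p ≤ q) (hr : 2 ≤ r)
    (hpqr : 1/p + 1/q + 1/r < 1)
    (hN : 2 + N = (1/p - 1/q)^2 / (1 - 1/p - 1/q - 1/r) + 1/p + 1/q) :
    2 + N ≤ 1/2 ∧ N ≤ -(3/2) := by
  have hp0 : (0:ℝ) < p := by linarith
  have hq0 : (0:ℝ) < q := by linarith
  have hr0 : (0:ℝ) < r := by linarith
  have ha : 1/p ≤ 1/4 := by
    rw [div_le_div_iff₀ hp0 (by norm_num)]; linarith
  have hb : 1/q ≤ 1/p := by
    exact one_div_le_one_div_of_le hp0 hpq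
  have hc : 1/r ≤ 1/2 := by
    rw [div_le_div_iff₀ hr0 (by norm_num)]; linarith
  have hb0 : 0 < 1/q := by positivity
  have hD : 0 < 1 - 1/p - 1/q - 1/r := by linarith
  have key : (1/p - 1/q)^2 / (1 - 1/p - 1/q - 1/r) ≤ 1/2 - 1/p - 1/q := by
    rw [div_le_iff₀ hD]
    nlinarith [sq_nonneg (1/p - 1/q), sq_nonneg (1/2 - 1/p - 1/q)]
  constructor
  · linarith
  · linarith
end

section
/- Let L ≥ 0, ε > 0, and suppose α : [0,1] → ℝ² is a geodesic segment of length ≤ L. Then there exists δ > 0 (depending only on L and ε) such that: for any path α' : [0,1] → ℝ² with the same endpoints as α and speed at most ℓ(α) + δ (meaning the length of α' restricted to any subinterval [s,t] is at most (ℓ(α)+δ)(t−s)), one has |α'(s) − α(s)| < ε for all s ∈ [0,1]. -/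
lemma dist_combo_sq (a b p : ℂ) (s : ℝ) :
    dist p ((1-s)•a + s•b) ^ 2
      = (1-s) * dist p a ^ 2 + s * dist p b ^ 2 - s*(1-s) * dist a b ^ 2 := by
  simp only [Complex.dist_eq, Complex.sq_norm, Complex.normSq_apply,
    Complex.sub_re, Complex.sub_im, Complex.add_re, Complex.add_im,
    Complex.smul_re, Complex.smul_im, smul_eq_mul]
  ring

/-- given `L ≥ 0` and `ε > 0`, there is `δ > 0` such that any path in
the Euclidean plane (modeled by `ℂ`) with the same endpoints as a geodesic segment
`α` of length `ℓ(α) ≤ L`, and of speed at most `ℓ(α) + δ` (the length of its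
restriction to `[s,t]` is at most `(ℓ(α)+δ)(t−s)`), stays uniformly within `ε`
of `α`. -/
theorem euclidean_thin_path (L : ℝ) (hL : 0 ≤ L) (ε : ℝ) (hε : 0 < ε) :
    ∃ δ > 0, ∀ α α' : ℝ → ℂ,
      IsGeodesic α → dist (α 0) (α 1) ≤ L →
      ContinuousOn α' (Set.Icc 0 1) → α' 0 = α 0 → α' 1 = α 1 →
      (∀ s ∈ Set.Icc (0:ℝ) 1, ∀ t ∈ Set.Icc (0:ℝ) 1, s ≤ t →
        eVariationOn α' (Set.Icc s t) ≤
          ENNReal.ofReal ((dist (α 0) (α 1) + δ) * (t - s))) →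
      ∀ s ∈ Set.Icc (0:ℝ) 1, dist (α' s) (α s) < ε := by
  refine ⟨min 1 (ε^2/(2*L+1)), lt_min one_pos (by positivity), ?_⟩
  set δ := min 1 (ε^2/(2*L+1)) with hδdef
  have hδ0 : 0 < δ := lt_min one_pos (by positivity)
  have hδ1 : δ ≤ 1 := min_le_left _ _
  have hδ2 : δ * (2*L+1) ≤ ε^2 := by
    have h := min_le_right 1 (ε^2/(2*L+1))
    calc δ * (2*L+1) ≤ (ε^2/(2*L+1)) * (2*L+1) :=
          mul_le_mul_of_nonneg_right h (by linarith)
      _ = ε^2 := by field_simp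
  clear_value δ
  clear hδdef
  intro α α' hgeo hlen hcont h0 h1 hvar s hs
  obtain ⟨hs0, hs1⟩ := hs
  set ℓ := dist (α 0) (α 1) with hℓdef
  have hℓ0 : 0 ≤ ℓ := dist_nonneg
  -- bounds on the path distances
  have hmem0 : (0:ℝ) ∈ Set.Icc (0:ℝ) 1 := ⟨le_refl _, zero_le_one⟩
  have hmem1 : (1:ℝ) ∈ Set.Icc (0:ℝ) 1 := ⟨zero_le_one, le_refl _⟩
  have hA : dist (α' s) (α 0) ≤ (ℓ + δ) * s := by
    rw [← h0]
    have h1' := hvar 0 hmem0 s ⟨hs0, hs1⟩ hs0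
    have h2' : edist (α' s) (α' 0) ≤ eVariationOn α' (Set.Icc 0 s) :=
      eVariationOn.edist_le α' (Set.mem_Icc.2 ⟨hs0, le_refl _⟩) (Set.mem_Icc.2 ⟨le_refl _, hs0⟩)
    have := h2'.trans h1'
    rw [sub_zero] at this
    exact (edist_le_ofReal (mul_nonneg (by linarith) hs0)).1 this
  have hB : dist (α' s) (α 1) ≤ (ℓ + δ) * (1 - s) := by
    rw [← h1]
    have h1' := hvar s ⟨hs0, hs1⟩ 1 hmem1 hs1
    have h2' : edist (α' s) (α' 1) ≤ eVariationOn α' (Set.Icc s 1) :=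
      eVariationOn.edist_le α' (Set.mem_Icc.2 ⟨le_refl _, hs1⟩) (Set.mem_Icc.2 ⟨hs1, le_refl _⟩)
    have := h2'.trans h1'
    exact (edist_le_ofReal (mul_nonneg (by linarith) (by linarith))).1 this
  -- α s is the convex combination
  have hαs : α s = (1-s) • α 0 + s • α 1 := by
    have hd0 : dist (α s) (α 0) = ℓ * s := by
      rw [hgeo s ⟨hs0, hs1⟩ 0 hmem0, sub_zero, abs_of_nonneg hs0]
    have hd1 : dist (α s) (α 1) = ℓ * (1 - s) := by
      rw [hgeo s ⟨hs0, hs1⟩ 1 hmem1, abs_of_nonpos (by linarith)]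
      ring
    rcases eq_or_lt_of_le hℓ0 with hℓz | hℓpos
    · have e0 : α s = α 0 := by
        have : dist (α s) (α 0) = 0 := by rw [hd0, ← hℓz]; ring
        exact dist_eq_zero.1 this
      have e1 : α 1 = α 0 := by
        have : dist (α 1) (α 0) = 0 := by rw [dist_comm, ← hℓdef, ← hℓz]
        exact dist_eq_zero.1 this
      rw [e0, e1, ← add_smul]
      simp
    · have hseg : α s ∈ segment ℝ (α 0) (α 1) := by
        rw [mem_segment_iff_wbtw, ← dist_add_dist_eq_iff]
        rw [dist_comm (α 0) (α s), hd0, hd1, ← hℓdef]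
        ring
      obtain ⟨u, v, hu, hv, huv, heq⟩ := hseg
      have hvℓ : dist (α s) (α 0) = v * ℓ := by
        rw [← heq]
        have : u • α 0 + v • α 1 - α 0 = v • (α 1 - α 0) := by
          have hu' : u = 1 - v := by linarith
          rw [hu', sub_smul, one_smul, smul_sub]
          abel
        rw [dist_eq_norm, this, norm_smul, Real.norm_eq_abs, abs_of_nonneg hv,
          ← dist_eq_norm, dist_comm, ← hℓdef]
      have hveq : v = s := by
        have : v * ℓ = ℓ * s := by rw [← hvℓ, hd0]
        have := mul_left_cancel₀ (ne_of_gt hℓpos) (by linarith [this] : ℓ * v = ℓ * s)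
        exact this
      have hueq : u = 1 - s := by linarith
      rw [← heq, hveq, hueq]
  -- final estimate
  have key := dist_combo_sq (α 0) (α 1) (α' s) s
  rw [← hαs, ← hℓdef] at key
  have hℓL : ℓ ≤ L := hlen
  clear_value ℓ
  clear hℓdef hαs hgeo hvar hcont h0 h1
  have hdnn : 0 ≤ dist (α' s) (α s) := dist_nonneg
  have hsq : dist (α' s) (α s) ^ 2 < ε ^ 2 := by
    have hAnn : 0 ≤ dist (α' s) (α 0) := dist_nonneg
    have hBnn : 0 ≤ dist (α' s) (α 1) := dist_nonneg
    have hA2 : dist (α' s) (α 0) ^ 2 ≤ ((ℓ + δ) * s) ^ 2 := by nlinarith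
    have hB2 : dist (α' s) (α 1) ^ 2 ≤ ((ℓ + δ) * (1 - s)) ^ 2 := by nlinarith
    have e1 : (1 - s) * dist (α' s) (α 0) ^ 2 ≤ (1 - s) * ((ℓ + δ) * s) ^ 2 :=
      mul_le_mul_of_nonneg_left hA2 (by linarith)
    have e2 : s * dist (α' s) (α 1) ^ 2 ≤ s * ((ℓ + δ) * (1 - s)) ^ 2 :=
      mul_le_mul_of_nonneg_left hB2 hs0
    have e3 : (1 - s) * ((ℓ + δ) * s) ^ 2 + s * ((ℓ + δ) * (1 - s)) ^ 2
        - s * (1 - s) * ℓ ^ 2 = s * (1 - s) * (2 * ℓ * δ + δ ^ 2) := by ring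
    have h3 : dist (α' s) (α s) ^ 2 ≤ s * (1 - s) * (2 * ℓ * δ + δ ^ 2) := by
      linarith [key, e1, e2, e3]
    have h4 : s * (1 - s) ≤ 1 / 4 := by nlinarith [sq_nonneg (s - 1/2)]
    have h5 : 0 ≤ 2 * ℓ * δ + δ ^ 2 := by positivity
    have h6 : s * (1 - s) * (2 * ℓ * δ + δ ^ 2) ≤ (1 / 4) * (2 * ℓ * δ + δ ^ 2) :=
      mul_le_mul_of_nonneg_right h4 h5
    have h7 : 2 * ℓ * δ + δ ^ 2 ≤ δ * (2 * L + 1) := by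
      nlinarith [mul_le_mul_of_nonneg_right hℓL hδ0.le, mul_le_mul_of_nonneg_left hδ1 hδ0.le]
    linarith [h3, h6, h7, hδ2, pow_pos hε 2]
  exact lt_of_pow_lt_pow_left₀ 2 hε.le hsq
end
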